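/- For fixed θ ∈ (0,1) and β > 1/3, the estimate |m̃(D)^{-1}(χ_ε(D) - I)(ζρ)|_{Y^{1+θ}} ≲ ε^{(1-θ)/2} |ζ|_{Y¹} |ρ|_{Y¹} holds for all ζ, ρ ∈ Y^{1+θ}, where m̃(k) = 1 + k₂²/k₁² + (1/2)(β-1/3)k₁². -/

import Mathlib

/-!
Write `w(k) = 1 + k₁² + k₂²/k₁²` for the `Y¹` weight. Off the cone `C_ε` one has `w ≥ (δ/ε)²`,
and `m̃ ≥ min(1, (β - 1/3)/2) · w`, so `w^{1+θ} |m̃⁻¹ (χ_ε - 1)|² ≲ w^{θ-1} ≲ (ε/δ)^{2(1-θ)}`: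
the multiplier maps `L²` into `Y^{1+θ}` with norm `≲ ε^{1-θ}`. It remains to bound the product
in `L²` by the `Y¹` norms (the Fourier form of `Y¹ ↪ L⁴`). By Cauchy–Schwarz,
`|f̂ * ĝ(k)|² ≤ (∫ w(j)⁻¹ w(k-j)⁻¹ dj) · ∫ w(j)|f̂(j)|² w(k-j)|ĝ(k-j)|² dj`, the first factor is
at most `∫ w⁻² ≤ π²`, and integrating the second in `k` gives `|f|²_{Y¹} |g|²_{Y¹}`. The bound
`∫ w⁻² ≤ π²` follows on each line `k₁ = a` from `w(a, x) ≥ 1 + a²`, `w(a, x) ≥ a² + x²/a²`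
and `∫ (a² + x²/a²)⁻¹ dx = π`.
-/

open MeasureTheory

/-- The anisotropic KP weight `(1 + k₁² + k₂²/k₁²)^r`. -/
noncomputable def wgt (r : ℝ) (k : ℝ × ℝ) : ℝ := (1 + k.1 ^ 2 + k.2 ^ 2 / k.1 ^ 2) ^ r

/-- The squared `Y^r` norm, computed on the Fourier side. -/
noncomputable def YnormSq (r : ℝ) (g : ℝ × ℝ → ℂ) : ℝ := ∫ k : ℝ × ℝ, wgt r k * ‖g k‖ ^ 2

/-- The KP symbol `m̃(k) = 1 + k₂²/k₁² + ½(β - 1/3)k₁²`. -/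
noncomputable def mKP (β : ℝ) (k : ℝ × ℝ) : ℝ :=
  1 + k.2 ^ 2 / k.1 ^ 2 + (1 / 2) * (β - 1 / 3) * k.1 ^ 2

/-- Characteristic function (as a complex scalar) of the cone `C_ε`. -/
noncomputable def chiC (ε δ : ℝ) (k : ℝ × ℝ) : ℂ :=
  if |k.1| ≤ δ / ε ∧ |k.2 / k.1| ≤ δ / ε then 1 else 0

/-- Convolution on the Fourier side (corresponding to a product in physical space). -/
noncomputable def conv (f g : ℝ × ℝ → ℂ) : ℝ × ℝ → ℂ := fun k => ∫ j : ℝ × ℝ, f j * g (k - j)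

open Real
open scoped ENNReal

lemma wgt_one (k : ℝ × ℝ) : wgt 1 k = 1 + k.1 ^ 2 + k.2 ^ 2 / k.1 ^ 2 :=
  Real.rpow_one _

lemma one_le_wgt_one (k : ℝ × ℝ) : 1 ≤ wgt 1 k := by
  rw [wgt_one]
  have : 0 ≤ k.2 ^ 2 / k.1 ^ 2 := by positivity
  nlinarith [sq_nonneg k.1]

lemma wgt_eq_wgt_one_rpow (r : ℝ) (k : ℝ × ℝ) : wgt r k = wgt 1 k ^ r := by
  rw [wgt_one]; rfl

lemma wgt_nonneg (r : ℝ) (k : ℝ × ℝ) : 0 ≤ wgt r k := by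
  rw [wgt_eq_wgt_one_rpow]
  exact Real.rpow_nonneg (zero_le_one.trans (one_le_wgt_one k)) r

lemma wgt_mono {r s : ℝ} (hrs : r ≤ s) (k : ℝ × ℝ) : wgt r k ≤ wgt s k := by
  simp only [wgt_eq_wgt_one_rpow r, wgt_eq_wgt_one_rpow s]
  exact Real.rpow_le_rpow_of_exponent_le (one_le_wgt_one k) hrs

@[fun_prop]
lemma measurable_wgt (r : ℝ) : Measurable (wgt r) := by
  unfold wgt; fun_prop

lemma ofReal_wgt_mul_norm_sq (r : ℝ) (g : ℝ × ℝ → ℂ) (k : ℝ × ℝ) :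
    ENNReal.ofReal (wgt r k * ‖g k‖ ^ 2) = ENNReal.ofReal (wgt r k) * ‖g k‖ₑ ^ 2 := by
  rw [ENNReal.ofReal_mul (wgt_nonneg r k), ENNReal.ofReal_pow (norm_nonneg _),
    ofReal_norm]

lemma YnormSq_nonneg (r : ℝ) (g : ℝ × ℝ → ℂ) : 0 ≤ YnormSq r g :=
  integral_nonneg fun k => by have := wgt_nonneg r k; positivity

lemma ofReal_YnormSq_le (r : ℝ) (g : ℝ × ℝ → ℂ) :
    ENNReal.ofReal (YnormSq r g) ≤ ∫⁻ k, ENNReal.ofReal (wgt r k) * ‖g k‖ₑ ^ 2 := by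
  rw [← Real.enorm_of_nonneg (YnormSq_nonneg r g)]
  refine (enorm_integral_le_lintegral_enorm _).trans_eq (lintegral_congr fun k => ?_)
  rw [← ofReal_wgt_mul_norm_sq, Real.enorm_of_nonneg (by have := wgt_nonneg r k; positivity)]

lemma ofReal_YnormSq {r : ℝ} {g : ℝ × ℝ → ℂ} (hg : Integrable fun k => wgt r k * ‖g k‖ ^ 2) :
    ENNReal.ofReal (YnormSq r g) = ∫⁻ k, ENNReal.ofReal (wgt r k) * ‖g k‖ₑ ^ 2 := by
  rw [YnormSq, ofReal_integral_eq_lintegral_ofReal hg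
    (ae_of_all _ fun k => by have := wgt_nonneg r k; positivity)]
  simp_rw [ofReal_wgt_mul_norm_sq]

lemma integrable_wgt_mul_norm_sq_of_le {r s : ℝ} (hrs : r ≤ s) {g : ℝ × ℝ → ℂ}
    (hg : Measurable g) (hint : Integrable fun k => wgt s k * ‖g k‖ ^ 2) :
    Integrable fun k => wgt r k * ‖g k‖ ^ 2 := by
  refine hint.mono' (by fun_prop) (ae_of_all _ fun k => ?_)
  rw [Real.norm_of_nonneg (by have := wgt_nonneg r k; positivity)]
  exact mul_le_mul_of_nonneg_right (wgt_mono hrs k) (sq_nonneg _)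

lemma lintegral_inv_sq_add_sq {c : ℝ} (hc : 0 < c) :
    ∫⁻ x : ℝ, ENNReal.ofReal ((c ^ 2 + x ^ 2)⁻¹) = ENNReal.ofReal (π / c) := by
  have hpdf : ∀ x : ℝ, ENNReal.ofReal ((c ^ 2 + x ^ 2)⁻¹)
      = ENNReal.ofReal (π / c) * ProbabilityTheory.cauchyPDF 0 c.toNNReal x := by
    intro x
    rw [ProbabilityTheory.cauchyPDF, ProbabilityTheory.cauchyPDFReal_def,
      ← ENNReal.ofReal_mul (by positivity), Real.coe_toNNReal _ hc.le, sub_zero]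
    congr 1
    field_simp
    ring
  simp_rw [hpdf]
  rw [lintegral_const_mul' _ _ ENNReal.ofReal_ne_top,
    ProbabilityTheory.lintegral_cauchyPDF_eq_one _ (by simpa using hc), mul_one]

lemma inv_wgt_one_sq_le {a : ℝ} (ha : a ≠ 0) (x : ℝ) :
    (wgt 1 (a, x))⁻¹ ^ 2 ≤ (1 + a ^ 2)⁻¹ * a ^ 2 * ((a ^ 2) ^ 2 + x ^ 2)⁻¹ := by
  have hw : (wgt 1 (a, x))⁻¹ ≤ (1 + a ^ 2)⁻¹ := by
    rw [wgt_one]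
    exact inv_anti₀ (by positivity) (le_add_of_nonneg_right (by positivity))
  have hw' : (wgt 1 (a, x))⁻¹ ≤ a ^ 2 * ((a ^ 2) ^ 2 + x ^ 2)⁻¹ := by
    have : a ^ 2 * ((a ^ 2) ^ 2 + x ^ 2)⁻¹ = (a ^ 2 + x ^ 2 / a ^ 2)⁻¹ := by
      field_simp
    rw [this, wgt_one]
    exact inv_anti₀ (by positivity) (by simp only; linarith)
  rw [sq, mul_assoc]
  exact mul_le_mul hw hw' (inv_nonneg.2 (wgt_nonneg 1 _)) (by positivity)

lemma lintegral_inv_wgt_one_sq_slice_le {a : ℝ} (ha : a ≠ 0) :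
    ∫⁻ x : ℝ, ENNReal.ofReal ((wgt 1 (a, x))⁻¹) ^ 2 ≤ ENNReal.ofReal (π * (1 + a ^ 2)⁻¹) :=
  calc ∫⁻ x : ℝ, ENNReal.ofReal ((wgt 1 (a, x))⁻¹) ^ 2
      ≤ ∫⁻ x : ℝ, ENNReal.ofReal ((1 + a ^ 2)⁻¹ * a ^ 2) * ENNReal.ofReal (((a ^ 2) ^ 2 + x ^ 2)⁻¹) :=
        lintegral_mono fun x => by
          rw [← ENNReal.ofReal_pow (by have := one_le_wgt_one (a, x); positivity),
            ← ENNReal.ofReal_mul (by positivity)]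
          exact ENNReal.ofReal_le_ofReal (inv_wgt_one_sq_le ha x)
    _ = ENNReal.ofReal (π * (1 + a ^ 2)⁻¹) := by
        rw [lintegral_const_mul' _ _ ENNReal.ofReal_ne_top, lintegral_inv_sq_add_sq (by positivity),
          ← ENNReal.ofReal_mul (by positivity)]
        congr 1
        field_simp

lemma lintegral_inv_wgt_one_sq_le :
    ∫⁻ k : ℝ × ℝ, ENNReal.ofReal ((wgt 1 k)⁻¹) ^ 2 ≤ ENNReal.ofReal (π ^ 2) :=
  calc ∫⁻ k : ℝ × ℝ, ENNReal.ofReal ((wgt 1 k)⁻¹) ^ 2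
      = ∫⁻ a : ℝ, ∫⁻ x : ℝ, ENNReal.ofReal ((wgt 1 (a, x))⁻¹) ^ 2 := by
        rw [Measure.volume_eq_prod, lintegral_prod _ (by fun_prop)]
    _ ≤ ∫⁻ a : ℝ, ENNReal.ofReal π * ENNReal.ofReal ((1 + a ^ 2)⁻¹) := by
        refine lintegral_mono_ae ?_
        -- the line `a = 0` has to be discarded: there `x ^ 2 / 0 = 0`, so the weight is `1`
        filter_upwards [Measure.ae_ne volume 0] with a ha
        rw [← ENNReal.ofReal_mul pi_nonneg]
        exact lintegral_inv_wgt_one_sq_slice_le ha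
    _ = ENNReal.ofReal (π ^ 2) := by
        have h := lintegral_inv_sq_add_sq one_pos
        rw [one_pow, div_one] at h
        rw [lintegral_const_mul' _ _ ENNReal.ofReal_ne_top, h, ← ENNReal.ofReal_mul pi_nonneg, sq]

theorem ENNReal.lintegral_sq_le_mul_of_sq_le_mul {α : Type*} [MeasurableSpace α] {μ : Measure α}
    {h p q : α → ℝ≥0∞} (hp : AEMeasurable p μ) (hq : AEMeasurable q μ)
    (hpq : ∀ x, h x ^ 2 ≤ p x * q x) :
    (∫⁻ x, h x ∂μ) ^ 2 ≤ (∫⁻ x, p x ∂μ) * ∫⁻ x, q x ∂μ := by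
  have hsq : ∀ y : ℝ≥0∞, (y ^ (1 / 2 : ℝ)) ^ (2 : ℝ) = y := fun y => by
    rw [← ENNReal.rpow_mul]; norm_num
  have hh : ∀ x, h x ≤ p x ^ (1 / 2 : ℝ) * q x ^ (1 / 2 : ℝ) := fun x => by
    rw [← ENNReal.mul_rpow_of_nonneg _ _ (by norm_num), ← ENNReal.rpow_le_rpow_iff two_pos,
      hsq, ENNReal.rpow_two]
    exact hpq x
  have holder := ENNReal.lintegral_mul_le_Lp_mul_Lq μ (Real.HolderConjugate.two_two)
    (hp.pow_const (1 / 2 : ℝ)) (hq.pow_const (1 / 2 : ℝ))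
  simp only [Pi.mul_apply, hsq] at holder
  calc (∫⁻ x, h x ∂μ) ^ 2
      ≤ ((∫⁻ x, p x ∂μ) ^ (1 / 2 : ℝ) * (∫⁻ x, q x ∂μ) ^ (1 / 2 : ℝ)) ^ 2 :=
        ENNReal.pow_le_pow_left ((lintegral_mono hh).trans holder)
    _ = (∫⁻ x, p x ∂μ) * ∫⁻ x, q x ∂μ := by
        rw [← ENNReal.rpow_two, ENNReal.mul_rpow_of_nonneg _ _ zero_le_two, hsq, hsq]

section WeightedConvolution

variable {W : ℝ × ℝ → ℝ≥0∞}

lemma lintegral_inv_mul_inv_sub_le (hW : Measurable W) (k : ℝ × ℝ) :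
    ∫⁻ j, (W j)⁻¹ * (W (k - j))⁻¹ ≤ ∫⁻ j, (W j)⁻¹ ^ 2 := by
  have hCS := ENNReal.lintegral_sq_le_mul_of_sq_le_mul (μ := volume)
    (h := fun j => (W j)⁻¹ * (W (k - j))⁻¹) (by fun_prop) (by fun_prop)
    (fun j => (mul_pow _ _ 2).le)
  rw [lintegral_sub_left_eq_self (fun j => (W j)⁻¹ ^ 2) k, ← sq] at hCS
  exact (ENNReal.pow_le_pow_left_iff two_ne_zero).1 hCS

lemma enorm_conv_sq_le (hW : Measurable W) (hW0 : ∀ k, W k ≠ 0) (hWtop : ∀ k, W k ≠ ∞)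
    {f g : ℝ × ℝ → ℂ} (hf : Measurable f) (hg : Measurable g) (k : ℝ × ℝ) :
    ‖conv f g k‖ₑ ^ 2 ≤ (∫⁻ j, (W j)⁻¹ * (W (k - j))⁻¹) *
      ∫⁻ j, W j * ‖f j‖ₑ ^ 2 * (W (k - j) * ‖g (k - j)‖ₑ ^ 2) := by
  have hsplit : ∀ (h : ℝ × ℝ → ℂ) j, ‖h j‖ₑ ^ 2 = (W j)⁻¹ * (W j * ‖h j‖ₑ ^ 2) := fun h j =>
    (ENNReal.inv_mul_cancel_left (hW0 j) (hWtop j)).symm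
  calc ‖conv f g k‖ₑ ^ 2
      ≤ (∫⁻ j, ‖f j‖ₑ * ‖g (k - j)‖ₑ) ^ 2 := by
        refine ENNReal.pow_le_pow_left ((enorm_integral_le_lintegral_enorm _).trans_eq ?_)
        simp_rw [enorm_mul]
    _ ≤ _ := by
        refine ENNReal.lintegral_sq_le_mul_of_sq_le_mul (by fun_prop) (by fun_prop) fun j => ?_
        refine le_of_eq ?_
        calc (‖f j‖ₑ * ‖g (k - j)‖ₑ) ^ 2
            = (W j)⁻¹ * (W j * ‖f j‖ₑ ^ 2) * ((W (k - j))⁻¹ * (W (k - j) * ‖g (k - j)‖ₑ ^ 2)) := by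
              rw [mul_pow, ← hsplit f j, ← hsplit g (k - j)]
          _ = _ := by ring

lemma lintegral_enorm_conv_sq_le (hW : Measurable W) (hW0 : ∀ k, W k ≠ 0)
    (hWtop : ∀ k, W k ≠ ∞) {f g : ℝ × ℝ → ℂ} (hf : Measurable f) (hg : Measurable g) :
    ∫⁻ k, ‖conv f g k‖ₑ ^ 2 ≤
      (∫⁻ j, (W j)⁻¹ ^ 2) * ((∫⁻ j, W j * ‖f j‖ₑ ^ 2) * ∫⁻ j, W j * ‖g j‖ₑ ^ 2) := by
  set F : ℝ × ℝ → ℝ≥0∞ := fun j => W j * ‖f j‖ₑ ^ 2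
  set G : ℝ × ℝ → ℝ≥0∞ := fun j => W j * ‖g j‖ₑ ^ 2
  have hFG : Measurable fun p : (ℝ × ℝ) × (ℝ × ℝ) => F p.2 * G (p.1 - p.2) := by fun_prop
  calc ∫⁻ k, ‖conv f g k‖ₑ ^ 2
      ≤ ∫⁻ k, (∫⁻ j, (W j)⁻¹ ^ 2) * ∫⁻ j, F j * G (k - j) := lintegral_mono fun k =>
        (enorm_conv_sq_le hW hW0 hWtop hf hg k).trans
          (mul_le_mul_left (lintegral_inv_mul_inv_sub_le hW k) _)
    _ = (∫⁻ j, (W j)⁻¹ ^ 2) * ∫⁻ j, ∫⁻ k, F j * G (k - j) := by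
        rw [lintegral_const_mul _ hFG.lintegral_prod_right', lintegral_lintegral_swap hFG.aemeasurable]
    _ = (∫⁻ j, (W j)⁻¹ ^ 2) * ((∫⁻ j, F j) * ∫⁻ j, G j) := by
        have hG : ∀ j, ∫⁻ k, F j * G (k - j) = F j * ∫⁻ k, G k := fun j => by
          rw [lintegral_const_mul _ (by fun_prop), lintegral_sub_right_eq_self G]
        simp_rw [hG]
        exact congrArg _ (lintegral_mul_const _ (by fun_prop))

end WeightedConvolution

lemma lintegral_enorm_conv_sq_le_YnormSq {f g : ℝ × ℝ → ℂ} (hf : Measurable f)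
    (hg : Measurable g) (hfi : Integrable fun k => wgt 1 k * ‖f k‖ ^ 2)
    (hgi : Integrable fun k => wgt 1 k * ‖g k‖ ^ 2) :
    ∫⁻ k, ‖conv f g k‖ₑ ^ 2 ≤ ENNReal.ofReal (π ^ 2 * (YnormSq 1 f * YnormSq 1 g)) := by
  have hW0 : ∀ k, ENNReal.ofReal (wgt 1 k) ≠ 0 := fun k =>
    ENNReal.ofReal_ne_zero_iff.2 (zero_lt_one.trans_le (one_le_wgt_one k))
  have hinv : ∀ k, (ENNReal.ofReal (wgt 1 k))⁻¹ = ENNReal.ofReal ((wgt 1 k)⁻¹) := fun k =>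
    (ENNReal.ofReal_inv_of_pos (zero_lt_one.trans_le (one_le_wgt_one k))).symm
  calc ∫⁻ k, ‖conv f g k‖ₑ ^ 2
      ≤ (∫⁻ j, (ENNReal.ofReal (wgt 1 j))⁻¹ ^ 2) * ((∫⁻ j, ENNReal.ofReal (wgt 1 j) * ‖f j‖ₑ ^ 2)
          * ∫⁻ j, ENNReal.ofReal (wgt 1 j) * ‖g j‖ₑ ^ 2) :=
        lintegral_enorm_conv_sq_le (by fun_prop) hW0 (fun _ => ENNReal.ofReal_ne_top) hf hg
    _ ≤ ENNReal.ofReal (π ^ 2) * (ENNReal.ofReal (YnormSq 1 f) * ENNReal.ofReal (YnormSq 1 g)) := by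
        simp_rw [hinv, ← ofReal_YnormSq hfi, ← ofReal_YnormSq hgi]
        exact mul_le_mul_left lintegral_inv_wgt_one_sq_le _
    _ = ENNReal.ofReal (π ^ 2 * (YnormSq 1 f * YnormSq 1 g)) := by
        rw [ENNReal.ofReal_mul (sq_nonneg π), ENNReal.ofReal_mul (YnormSq_nonneg 1 f)]

lemma min_mul_wgt_one_le_mKP (β : ℝ) (k : ℝ × ℝ) :
    min 1 ((1 / 2) * (β - 1 / 3)) * wgt 1 k ≤ mKP β k := by
  have h1 := min_le_left 1 ((1 / 2) * (β - 1 / 3))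
  have h2 := min_le_right 1 ((1 / 2) * (β - 1 / 3))
  have hq : 0 ≤ k.2 ^ 2 / k.1 ^ 2 := by positivity
  rw [wgt_one, mKP]
  nlinarith [sq_nonneg k.1]

lemma sq_le_wgt_one_of_not_mem_cone {R : ℝ} (hR : 0 ≤ R) {k : ℝ × ℝ}
    (hk : ¬(|k.1| ≤ R ∧ |k.2 / k.1| ≤ R)) : R ^ 2 ≤ wgt 1 k := by
  have hq : 0 ≤ k.2 ^ 2 / k.1 ^ 2 := by positivity
  rw [wgt_one]
  rcases not_and_or.1 hk with h | h
  · have := sq_le_sq' (by linarith [abs_nonneg k.1]) (le_of_lt (not_le.1 h))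
    rw [sq_abs] at this
    linarith
  · have := sq_le_sq' (by linarith [abs_nonneg (k.2 / k.1)]) (le_of_lt (not_le.1 h))
    rw [sq_abs, div_pow] at this
    nlinarith [sq_nonneg k.1]

lemma rpow_one_add_mul_inv_sq_le {w m c R θ : ℝ} (hc : 0 < c) (hR : 0 < R) (hRw : R ^ 2 ≤ w)
    (hm : c * w ≤ m) (hθ : θ ≤ 1) : w ^ (1 + θ) * m⁻¹ ^ 2 ≤ (c⁻¹ * R ^ (θ - 1)) ^ 2 := by
  have hw : 0 < w := (by positivity : 0 < R ^ 2).trans_le hRw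
  have hm0 : 0 < m := (mul_pos hc hw).trans_le hm
  calc w ^ (1 + θ) * m⁻¹ ^ 2
      ≤ w ^ (1 + θ) * (c * w)⁻¹ ^ 2 := by
        gcongr
    _ = c⁻¹ ^ 2 * w ^ (θ - 1) := by
        rw [show θ - 1 = (1 + θ) + (-2 : ℤ) by push_cast; ring, Real.rpow_add_intCast hw.ne']
        field_simp
    _ ≤ c⁻¹ ^ 2 * (R ^ 2) ^ (θ - 1) := mul_le_mul_of_nonneg_left
        (Real.rpow_le_rpow_of_nonpos (by positivity) hRw (by linarith)) (by positivity)
    _ = (c⁻¹ * R ^ (θ - 1)) ^ 2 := by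
        rw [mul_pow, ← Real.rpow_natCast_mul hR.le, ← Real.rpow_mul_natCast hR.le]
        ring_nf

lemma wgt_mul_norm_symbol_sq_le {β δ θ ε : ℝ} (hβ : 1 / 3 < β) (hδ : 0 < δ) (hθ1 : θ ≤ 1)
    (hε : 0 < ε) (hε1 : ε ≤ 1) (k : ℝ × ℝ) :
    wgt (1 + θ) k * ‖((mKP β k : ℝ) : ℂ)⁻¹ * (chiC ε δ k - 1)‖ ^ 2
      ≤ ((min 1 ((1 / 2) * (β - 1 / 3)))⁻¹ * δ ^ (θ - 1) * ε ^ ((1 - θ) / 2)) ^ 2 := by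
  set c := min 1 ((1 / 2) * (β - 1 / 3))
  have hc : 0 < c := lt_min one_pos (by linarith)
  by_cases hk : |k.1| ≤ δ / ε ∧ |k.2 / k.1| ≤ δ / ε
  · rw [chiC, if_pos hk, sub_self, mul_zero, norm_zero, sq 0, mul_zero, mul_zero]
    positivity
  have hw := sq_le_wgt_one_of_not_mem_cone (div_pos hδ hε).le hk
  have hm := min_mul_wgt_one_le_mKP β k
  have hm0 : 0 < mKP β k := lt_of_lt_of_le (mul_pos hc (zero_lt_one.trans_le (one_le_wgt_one k))) hm
  have hnorm : ‖((mKP β k : ℝ) : ℂ)⁻¹ * (chiC ε δ k - 1)‖ = (mKP β k)⁻¹ := by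
    simp [chiC, if_neg hk, abs_of_pos hm0]
  calc wgt (1 + θ) k * ‖((mKP β k : ℝ) : ℂ)⁻¹ * (chiC ε δ k - 1)‖ ^ 2
      ≤ (c⁻¹ * (δ / ε) ^ (θ - 1)) ^ 2 := by
        rw [hnorm, wgt_eq_wgt_one_rpow]
        exact rpow_one_add_mul_inv_sq_le hc (div_pos hδ hε) hw hm hθ1
    _ ≤ (c⁻¹ * δ ^ (θ - 1) * ε ^ ((1 - θ) / 2)) ^ 2 := by
        rw [Real.div_rpow hδ.le hε.le, div_eq_mul_inv, ← Real.rpow_neg hε.le, neg_sub, ← mul_assoc]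
        have hε' : ε ^ (1 - θ) ≤ ε ^ ((1 - θ) / 2) :=
          Real.rpow_le_rpow_of_exponent_ge hε hε1 (by linarith)
        exact pow_le_pow_left₀ (by positivity) (mul_le_mul_of_nonneg_left hε' (by positivity)) 2

lemma YnormSq_mul_conv_le {r B : ℝ} {a f g : ℝ × ℝ → ℂ} (ha : ∀ k, wgt r k * ‖a k‖ ^ 2 ≤ B ^ 2)
    (hf : Measurable f) (hg : Measurable g) (hfi : Integrable fun k => wgt 1 k * ‖f k‖ ^ 2)
    (hgi : Integrable fun k => wgt 1 k * ‖g k‖ ^ 2) :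
    YnormSq r (fun k => a k * conv f g k) ≤ B ^ 2 * (π ^ 2 * (YnormSq 1 f * YnormSq 1 g)) := by
  have hYf := YnormSq_nonneg 1 f
  have hYg := YnormSq_nonneg 1 g
  refine (ENNReal.ofReal_le_ofReal_iff (by positivity)).1 ?_
  calc ENNReal.ofReal (YnormSq r fun k => a k * conv f g k)
      ≤ ∫⁻ k, ENNReal.ofReal (wgt r k) * ‖a k * conv f g k‖ₑ ^ 2 := ofReal_YnormSq_le _ _
    _ ≤ ∫⁻ k, ENNReal.ofReal (B ^ 2) * ‖conv f g k‖ₑ ^ 2 := lintegral_mono fun k => by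
        rw [enorm_mul, mul_pow, ← mul_assoc, ← ofReal_norm, ← ENNReal.ofReal_pow (norm_nonneg _),
          ← ENNReal.ofReal_mul (wgt_nonneg _ _)]
        gcongr
        exact ha k
    _ ≤ ENNReal.ofReal (B ^ 2) * ENNReal.ofReal (π ^ 2 * (YnormSq 1 f * YnormSq 1 g)) := by
        rw [lintegral_const_mul' _ _ ENNReal.ofReal_ne_top]
        gcongr
        exact lintegral_enorm_conv_sq_le_YnormSq hf hg hfi hgi
    _ = ENNReal.ofReal (B ^ 2 * (π ^ 2 * (YnormSq 1 f * YnormSq 1 g))) :=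
        (ENNReal.ofReal_mul (sq_nonneg B)).symm

theorem stmt10_general (β δ θ : ℝ) (hβ : 1 / 3 < β) (hδ : 0 < δ)
    (hθ : 0 < θ) (hθ1 : θ < 1) :
    ∃ C > (0 : ℝ), ∀ ε : ℝ, 0 < ε → ε < 1 → ∀ f g : ℝ × ℝ → ℂ,
      Measurable f → Measurable g →
      Integrable (fun k => wgt (1 + θ) k * ‖f k‖ ^ 2) →
      Integrable (fun k => wgt (1 + θ) k * ‖g k‖ ^ 2) →
      Real.sqrt (YnormSq (1 + θ)
          (fun k => ((mKP β k : ℝ) : ℂ)⁻¹ * (chiC ε δ k - 1) * conv f g k))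
        ≤ C * ε ^ ((1 - θ) / 2) * Real.sqrt (YnormSq 1 f) * Real.sqrt (YnormSq 1 g) := by
  set C₀ := (min 1 ((1 / 2) * (β - 1 / 3)))⁻¹ * δ ^ (θ - 1)
  have hC₀ : 0 < C₀ := mul_pos (inv_pos.2 (lt_min one_pos (by linarith))) (Real.rpow_pos_of_pos hδ _)
  refine ⟨C₀ * π, by positivity, fun ε hε hε1 f g hf hg hfi hgi => ?_⟩
  have hYf := YnormSq_nonneg 1 f
  have hYg := YnormSq_nonneg 1 g
  have hY := YnormSq_mul_conv_le (wgt_mul_norm_symbol_sq_le hβ hδ hθ1.le hε hε1.le) hf hg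
    (integrable_wgt_mul_norm_sq_of_le (by linarith) hf hfi)
    (integrable_wgt_mul_norm_sq_of_le (by linarith) hg hgi)
  calc _ ≤ √((C₀ * ε ^ ((1 - θ) / 2)) ^ 2 * (π ^ 2 * (YnormSq 1 f * YnormSq 1 g))) :=
        Real.sqrt_le_sqrt hY
    _ = C₀ * π * ε ^ ((1 - θ) / 2) * √(YnormSq 1 f) * √(YnormSq 1 g) := by
        rw [Real.sqrt_mul' _ (by positivity), Real.sqrt_mul' _ (by positivity),
          Real.sqrt_mul' _ hYg, Real.sqrt_sq (by positivity), Real.sqrt_sq pi_nonneg]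
        ring

/-- Bilinear estimate: `|m̃(D)⁻¹(χ_ε(D) - I)(ζρ)|_{Y^{1+θ}} ≲ ε^{(1-θ)/2} |ζ|_{Y¹} |ρ|_{Y¹}`
for θ ∈ (0,1), stated on the Fourier side with the physical-space product expressed as a
convolution. -/
theorem stmt10 (β δ θ : ℝ) (hβ : 1 / 3 < β) (hδ : 0 < δ) (hδ1 : δ < 1)
    (hθ : 0 < θ) (hθ1 : θ < 1) :
    ∃ C > (0 : ℝ), ∀ ε : ℝ, 0 < ε → ε < 1 → ∀ f g : ℝ × ℝ → ℂ,
      Measurable f → Measurable g →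
      Integrable (fun k => wgt (1 + θ) k * ‖f k‖ ^ 2) →
      Integrable (fun k => wgt (1 + θ) k * ‖g k‖ ^ 2) →
      Real.sqrt (YnormSq (1 + θ)
          (fun k => ((mKP β k : ℝ) : ℂ)⁻¹ * (chiC ε δ k - 1) * conv f g k))
        ≤ C * ε ^ ((1 - θ) / 2) * Real.sqrt (YnormSq 1 f) * Real.sqrt (YnormSq 1 g) :=
  stmt10_general β δ θ hβ hδ hθ hθ1
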